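/- arXiv:1611.09778 — 2 statements merged into one kernel-verified Lean document; each statement's English description precedes it below -/
import Mathlib

section
/- If P is a symmetric positive definite solution of the algebraic Riccati equation AᵀP + PA - PBR⁻¹BᵀP + Q = 0 with Q positive definite and R positive definite, then every eigenvalue λ of A - BR⁻¹BᵀP has strictly negative real part. -/
/-!
For the closed-loop matrix `K = A - B R⁻¹ Bᵀ P`, the Riccati equation is equivalent to the
Lyapunov identity `Kᵀ P + P K = -(Q + P B R⁻¹ Bᵀ P)`, whose right-hand side is negative definite.
Testing it against a complex eigenvector `v` of `K` with eigenvalue `μ` gives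
`2 Re μ · vᴴ P v = -vᴴ (Q + P B R⁻¹ Bᵀ P) v`, and both quadratic forms are positive, so `Re μ < 0`.
-/

open Matrix
open scoped ComplexOrder

namespace Matrix

variable {ι κ : Type*} [Fintype ι]

lemma re_star_dotProduct_map_ofReal_mulVec (P : Matrix ι ι ℝ) (v : ι → ℂ) :
    (star v ⬝ᵥ P.map Complex.ofReal *ᵥ v).re =
      (fun i => (v i).re) ⬝ᵥ P *ᵥ (fun i => (v i).re) +
        (fun i => (v i).im) ⬝ᵥ P *ᵥ (fun i => (v i).im) := by
  simp only [dotProduct, mulVec, map_apply, Pi.star_apply, Complex.re_sum, Finset.mul_sum,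
    ← Finset.sum_add_distrib]
  refine Finset.sum_congr rfl fun i _ => Finset.sum_congr rfl fun j _ => ?_
  simp only [Complex.mul_re, Complex.mul_im, Complex.ofReal_re, Complex.ofReal_im,
    RCLike.star_def, Complex.conj_re, Complex.conj_im]
  ring

lemma PosDef.map_ofReal {P : Matrix ι ι ℝ} (hP : P.PosDef) : (P.map Complex.ofReal).PosDef := by
  have hherm : (P.map Complex.ofReal).IsHermitian :=
    hP.isHermitian.map _ fun x => (Complex.conj_ofReal x).symm
  refine posDef_iff_dotProduct_mulVec.mpr ⟨hherm, fun v hv => RCLike.pos_iff.mpr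
    ⟨?_, hherm.im_star_dotProduct_mulVec_self v⟩⟩
  have hre_or_im : (fun i => (v i).re) ≠ 0 ∨ (fun i => (v i).im) ≠ 0 := by
    by_contra! h
    exact hv (funext fun i => Complex.ext (congrFun h.1 i) (congrFun h.2 i))
  change 0 < (star v ⬝ᵥ P.map Complex.ofReal *ᵥ v).re
  rw [re_star_dotProduct_map_ofReal_mulVec]
  rcases hre_or_im with h | h
  · exact add_pos_of_pos_of_nonneg (by simpa using hP.dotProduct_mulVec_pos h)
      (by simpa using hP.posSemidef.dotProduct_mulVec_nonneg _)
  · exact add_pos_of_nonneg_of_pos (by simpa using hP.posSemidef.dotProduct_mulVec_nonneg _)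
      (by simpa using hP.dotProduct_mulVec_pos h)

lemma exists_mulVec_eq_smul_of_mem_spectrum [DecidableEq ι] {F : Type*} [Field F]
    {A : Matrix ι ι F} {μ : F} (hμ : μ ∈ spectrum F A) : ∃ v ≠ 0, A *ᵥ v = μ • v := by
  rw [← spectrum_toLin', ← Module.End.hasEigenvalue_iff_mem_spectrum] at hμ
  obtain ⟨v, hv⟩ := hμ.exists_hasEigenvector
  exact ⟨v, hv.2, by simpa using hv.apply_eq_smul⟩

lemma re_lt_zero_of_mem_spectrum_of_lyapunov [DecidableEq ι] {𝕜 : Type*} [RCLike 𝕜]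
    {K P M : Matrix ι ι 𝕜} (hP : P.PosDef) (hM : M.PosDef) (hK : Kᴴ * P + P * K = -M) {μ : 𝕜}
    (hμ : μ ∈ spectrum 𝕜 K) : RCLike.re μ < 0 := by
  obtain ⟨v, hv, hKv⟩ := exists_mulVec_eq_smul_of_mem_spectrum hμ
  have hquad : (star μ + μ) * (star v ⬝ᵥ P *ᵥ v) = -(star v ⬝ᵥ M *ᵥ v) := by
    have := congrArg (fun X => star v ⬝ᵥ X *ᵥ v) hK
    simp only [add_mulVec, neg_mulVec, dotProduct_add, dotProduct_neg, ← mulVec_mulVec] at this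
    rw [← this, dotProduct_mulVec _ Kᴴ, vecMul_conjTranspose, star_star, hKv, star_smul,
      smul_dotProduct, mulVec_smul, dotProduct_smul, smul_eq_mul, smul_eq_mul, add_mul]
  have hPv := RCLike.pos_iff.mp (hP.dotProduct_mulVec_pos hv)
  have hMv := RCLike.pos_iff.mp (hM.dotProduct_mulVec_pos hv)
  have hquad_re := congrArg RCLike.re hquad
  simp only [RCLike.mul_re, hPv.2, mul_zero, sub_zero, map_add, RCLike.star_def, RCLike.conj_re,
    map_neg] at hquad_re
  nlinarith

lemma closedLoop_lyapunov_of_riccati [Fintype κ] [DecidableEq κ] {α : Type*} [CommRing α]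
    {A Q P : Matrix ι ι α} {B : Matrix ι κ α} {R : Matrix κ κ α}
    (hP : Pᵀ = P) (hR : Rᵀ = R) (hRiccati : Aᵀ * P + P * A - P * B * R⁻¹ * Bᵀ * P + Q = 0) :
    (A - B * R⁻¹ * Bᵀ * P)ᵀ * P + P * (A - B * R⁻¹ * Bᵀ * P) = -(Q + P * B * R⁻¹ * Bᵀ * P) := by
  rw [← sub_eq_zero, ← hRiccati]
  simp only [transpose_sub, transpose_mul, transpose_transpose, transpose_nonsing_inv, hP, hR,
    Matrix.sub_mul, Matrix.mul_sub, Matrix.mul_assoc]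
  abel

end Matrix

theorem riccati_solution_stabilizing {n m : ℕ}
    (A : Matrix (Fin n) (Fin n) ℝ) (B : Matrix (Fin n) (Fin m) ℝ)
    (Q P : Matrix (Fin n) (Fin n) ℝ) (R : Matrix (Fin m) (Fin m) ℝ)
    (hQ : Q.PosDef) (hR : R.PosDef) (hP : P.PosDef)
    (hRiccati : Aᵀ * P + P * A - P * B * R⁻¹ * Bᵀ * P + Q = 0) :
    ∀ μ : ℂ, μ ∈ spectrum ℂ ((A - B * R⁻¹ * Bᵀ * P).map Complex.ofReal) → μ.re < 0 := by
  intro μ hμ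
  have hPsym : Pᵀ = P := isHermitian_iff_isSymm.mp hP.isHermitian
  have hLyap := closedLoop_lyapunov_of_riccati hPsym (isHermitian_iff_isSymm.mp hR.isHermitian)
    hRiccati
  have hM : (Q + P * B * R⁻¹ * Bᵀ * P).PosDef := by
    refine hQ.add_posSemidef ?_
    simpa [hPsym, Matrix.mul_assoc] using hR.inv.posSemidef.conjTranspose_mul_mul_same (Bᵀ * P)
  refine re_lt_zero_of_mem_spectrum_of_lyapunov hP.map_ofReal hM.map_ofReal ?_ hμ
  have hLyapC := congrArg Complex.ofRealHom.mapMatrix hLyap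
  rw [map_add, map_mul, map_mul, map_neg, RingHom.mapMatrix_apply,
    ← conjTranspose_eq_transpose_of_trivial,
    conjTranspose_map (f := Complex.ofRealHom) fun x => (Complex.conj_ofReal x).symm] at hLyapC
  exact hLyapC
end

section
/- Suppose P₁ and P₂ are symmetric solutions of the algebraic Riccati equation AᵀP + PA - PBR⁻¹BᵀP + Q = 0 such that both closed-loop matrices A - BR⁻¹BᵀPᵢ are Hurwitz. Then P₁ = P₂ (uniqueness of the stabilizing Riccati solution). -/
open Matrix Polynomial

variable {k : ℕ}

lemma eval_charpoly' (M : Matrix (Fin k) (Fin k) ℂ) (μ : ℂ) :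
    M.charpoly.eval μ = (μ • (1 : Matrix (Fin k) (Fin k) ℂ) - M).det := by
  rw [Matrix.charpoly, ← Polynomial.coe_evalRingHom, RingHom.map_det]
  congr 1
  ext i j
  by_cases h : i = j
  · subst h
    simp [charmatrix_apply_eq, Matrix.smul_apply, Matrix.one_apply]
  · simp [charmatrix_apply_ne M i j h, Matrix.smul_apply, Matrix.one_apply, h]

lemma mem_spectrum_iff_isRoot (M : Matrix (Fin k) (Fin k) ℂ) (μ : ℂ) :
    μ ∈ spectrum ℂ M ↔ M.charpoly.IsRoot μ := by
  rw [spectrum.mem_iff, Matrix.isUnit_iff_isUnit_det, isUnit_iff_ne_zero, not_ne_iff,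
    Polynomial.IsRoot, eval_charpoly', Algebra.algebraMap_eq_smul_one]

lemma spectrum_transpose (M : Matrix (Fin k) (Fin k) ℂ) :
    spectrum ℂ Mᵀ = spectrum ℂ M := by
  ext μ
  rw [spectrum.mem_iff, spectrum.mem_iff]
  have : algebraMap ℂ (Matrix (Fin k) (Fin k) ℂ) μ - Mᵀ
      = (algebraMap ℂ (Matrix (Fin k) (Fin k) ℂ) μ - M)ᵀ := by
    simp [Algebra.algebraMap_eq_smul_one, transpose_sub]
  rw [this, Matrix.isUnit_transpose]

lemma pow_commute (M N D : Matrix (Fin k) (Fin k) ℂ) (h : M * D = D * N) (i : ℕ) :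
    M ^ i * D = D * N ^ i := by
  induction i with
  | zero => simp
  | succ i hi =>
    rw [pow_succ, pow_succ, mul_assoc, h, ← mul_assoc, hi, mul_assoc]

lemma aeval_commute (M N D : Matrix (Fin k) (Fin k) ℂ) (h : M * D = D * N)
    (p : ℂ[X]) : (aeval M p) * D = D * (aeval N p) := by
  rw [Polynomial.aeval_eq_sum_range, Polynomial.aeval_eq_sum_range,
    Finset.sum_mul, Finset.mul_sum]
  refine Finset.sum_congr rfl fun i _ => ?_
  rw [smul_mul_assoc, mul_smul_comm, pow_commute M N D h i]

theorem stabilizing_riccati_solution_unique {n m : ℕ}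
    (A : Matrix (Fin n) (Fin n) ℝ) (B : Matrix (Fin n) (Fin m) ℝ)
    (Q : Matrix (Fin n) (Fin n) ℝ) (hQ : Q.IsSymm)
    (R : Matrix (Fin m) (Fin m) ℝ) (hR : R.PosDef)
    (P₁ P₂ : Matrix (Fin n) (Fin n) ℝ) (hP₁ : P₁.IsSymm) (hP₂ : P₂.IsSymm)
    (hric₁ : Aᵀ * P₁ + P₁ * A - P₁ * B * R⁻¹ * Bᵀ * P₁ + Q = 0)
    (hric₂ : Aᵀ * P₂ + P₂ * A - P₂ * B * R⁻¹ * Bᵀ * P₂ + Q = 0)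
    (hstab₁ : ∀ μ : ℂ, μ ∈ spectrum ℂ ((A - B * R⁻¹ * Bᵀ * P₁).map Complex.ofReal) → μ.re < 0)
    (hstab₂ : ∀ μ : ℂ, μ ∈ spectrum ℂ ((A - B * R⁻¹ * Bᵀ * P₂).map Complex.ofReal) → μ.re < 0) :
    P₁ = P₂ := by
  rcases Nat.eq_zero_or_pos n with hn | hn
  · subst hn; ext i; exact i.elim0
  -- symmetry of R⁻¹
  have hRT : Rᵀ = R := by
    have := hR.1.eq
    simpa [Matrix.conjTranspose, Matrix.map, Matrix.transpose] using this
  have hRinvT : (R⁻¹)ᵀ = R⁻¹ := by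
    rw [Matrix.transpose_nonsing_inv, hRT]
  have hkey : (Aᵀ - P₁ * B * R⁻¹ * Bᵀ) * (P₁ - P₂) + (P₁ - P₂) * (A - B * R⁻¹ * Bᵀ * P₂)
      = 0 := by
    have e : (Aᵀ - P₁ * B * R⁻¹ * Bᵀ) * (P₁ - P₂) + (P₁ - P₂) * (A - B * R⁻¹ * Bᵀ * P₂)
        = (Aᵀ * P₁ + P₁ * A - P₁ * B * R⁻¹ * Bᵀ * P₁ + Q)
          - (Aᵀ * P₂ + P₂ * A - P₂ * B * R⁻¹ * Bᵀ * P₂ + Q) := by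
      simp only [sub_mul, mul_sub, Matrix.mul_assoc]
      abel
    rw [e, hric₁, hric₂, sub_zero]
  have hT : (A - B * R⁻¹ * Bᵀ * P₁)ᵀ = Aᵀ - P₁ * B * R⁻¹ * Bᵀ := by
    rw [transpose_sub, transpose_mul, transpose_mul, transpose_mul, transpose_transpose,
      hRinvT, hP₁]
    rw [Matrix.mul_assoc, Matrix.mul_assoc]
  haveI : Nonempty (Fin n) := ⟨⟨0, hn⟩⟩
  set M : Matrix (Fin n) (Fin n) ℂ := (Aᵀ - P₁ * B * R⁻¹ * Bᵀ).map Complex.ofReal with hM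
  set N : Matrix (Fin n) (Fin n) ℂ := (A - B * R⁻¹ * Bᵀ * P₂).map Complex.ofReal with hN
  set D : Matrix (Fin n) (Fin n) ℂ := (P₁ - P₂).map Complex.ofReal with hD
  have hMD : M * D + D * N = 0 := by
    have h2 := congrArg (Complex.ofRealHom.mapMatrix) hkey
    have hcoe : ⇑Complex.ofRealHom = Complex.ofReal := rfl
    simpa only [map_add, _root_.map_mul, map_zero, RingHom.mapMatrix_apply,
      hcoe, hM, hN, hD] using h2
  have hMDN : M * D = D * (-N) := by
    rw [mul_neg]
    exact eq_neg_of_add_eq_zero_left hMD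
  have h3 : D * (aeval (-N) M.charpoly) = 0 := by
    rw [← aeval_commute M (-N) D hMDN M.charpoly, Matrix.aeval_self_charpoly, zero_mul]
  have hdeg : 0 < M.charpoly.degree := by
    rw [Matrix.charpoly_degree_eq_dim]
    simpa using hn
  have hunit : IsUnit (aeval (-N) M.charpoly) := by
    by_contra hcon
    have h0 : (0 : ℂ) ∈ spectrum ℂ (aeval (-N) M.charpoly) :=
      (spectrum.zero_mem_iff ℂ).mpr hcon
    rw [spectrum.map_polynomial_aeval_of_degree_pos (-N) M.charpoly hdeg] at h0
    obtain ⟨μ, hμ, hev⟩ := h0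
    have hμ' : -μ ∈ spectrum ℂ N := by
      have hne := spectrum.neg_eq (R := ℂ) N
      rw [← hne] at hμ
      simpa using hμ
    have hre2 : (-μ).re < 0 := hstab₂ (-μ) hμ'
    have hμM : μ ∈ spectrum ℂ M := (mem_spectrum_iff_isRoot M μ).mpr hev
    have hμ1 : μ ∈ spectrum ℂ ((A - B * R⁻¹ * Bᵀ * P₁).map Complex.ofReal) := by
      rw [← spectrum_transpose]
      have hMT : M = ((A - B * R⁻¹ * Bᵀ * P₁).map Complex.ofReal)ᵀ := by
        rw [hM, ← hT, ← Matrix.transpose_map]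
      rwa [hMT] at hμM
    have hre1 : μ.re < 0 := hstab₁ μ hμ1
    rw [Complex.neg_re] at hre2
    linarith
  have hdet := (Matrix.isUnit_iff_isUnit_det _).mp hunit
  have hD0 : D = 0 := by
    have h4 := congrArg (fun X => X * (aeval (-N) M.charpoly)⁻¹) h3
    simpa [mul_assoc, Matrix.mul_nonsing_inv _ hdet] using h4
  have hsub : P₁ - P₂ = 0 := by
    ext i j
    have h5 := congrFun (congrFun hD0 i) j
    simp only [hD, Matrix.map_apply, Matrix.zero_apply] at h5
    exact_mod_cast h5
  exact sub_eq_zero.mp hsub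
end
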